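/- Let 0 < α < 1, let T > 0, let N ≥ 2 be an integer, and consider the special quasi-uniform mesh on [0,T]. Let v : [0,T] → ℝ be twice continuously differentiable. Then for every 1 ≤ n ≤ N − 1 the L1 remainder satisfies |r^n| ≤ ( 1 + α + 2^{1−α}/(1−α) ) · max_{0 ≤ t ≤ t^n} |v''(t)| · T^{2−α} (N+1)^{α−2}. -/

import Mathlib

/-!
Write the remainder as the sum of the local errors
`Eₖ = ∫_{tₖ₋₁}^{tₖ} (v' s - slopeₖ) (tⁿ - s)^(-α) ds`. On a step of length `τ`,
`|v' - slope| ≤ M τ / 2`. On the last step, where the kernel is singular, this gives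
`|Eₙ| ≤ M τ^(2-α) / (2 (1 - α))`. On an earlier step `v' - slope` has mean zero, so the kernel
may be replaced by its deviation from its value at the midpoint, which is at most
`α (tⁿ - tₖ)^(-α-1) |s - mid|`; hence `|Eₖ| ≤ α M (τ/2)^3 (tⁿ - tₖ)^(-α-1)`.
On the quasi-uniform mesh every step is at most `2T/(N+1)` and `tⁿ - tₖ ≥ (n - k) τₖ / 2`, so
`|Eₖ| ≤ α M (T/(N+1))^(2-α) (n - k)^(-α-1)`, and comparison with an integral gives
`∑_{m ≥ 1} m^(-α-1) ≤ 1 + 1/α`.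
-/

open Real MeasureTheory intervalIntegral Set

theorem intervalIntegrable_sub_rpow {r : ℝ} (hr : -1 < r) (c a b : ℝ) :
    IntervalIntegrable (fun s => (c - s) ^ r) volume a b := by
  simpa using (intervalIntegrable_rpow' hr (a := c - a) (b := c - b)).comp_sub_left c

theorem integral_sub_rpow {r : ℝ} (hr : -1 < r) (a b : ℝ) :
    ∫ s in a..b, (b - s) ^ r = (b - a) ^ (r + 1) / (r + 1) := by
  rw [integral_comp_sub_left (fun x => x ^ r), sub_self, integral_rpow (Or.inl hr),
    zero_rpow (by linarith), sub_zero]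

theorem integral_abs_sub {a b s : ℝ} (hs : s ∈ Icc a b) :
    ∫ u in a..b, |s - u| = ((s - a) ^ 2 + (b - s) ^ 2) / 2 := by
  have hc : Continuous fun u : ℝ => |s - u| := by fun_prop
  rw [← integral_add_adjacent_intervals (hc.intervalIntegrable a s) (hc.intervalIntegrable s b),
    integral_congr (g := fun u => s - u) fun u hu => abs_of_nonneg (by
      rw [uIcc_of_le hs.1] at hu; linarith [hu.2]),
    integral_congr (g := fun u => u - s) fun u hu => (abs_sub_comm _ _).trans (abs_of_nonneg (by
      rw [uIcc_of_le hs.2] at hu; linarith [hu.1]))]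
  simp only [integral_comp_sub_left fun x => x, integral_comp_sub_right fun x => x, integral_id]
  ring

section SecondDerivativeBound

variable {v : ℝ → ℝ} {a b M : ℝ}

theorem abs_deriv_sub_deriv_le (hv : ContDiff ℝ 2 v)
    (hM : ∀ x ∈ Icc a b, |deriv (deriv v) x| ≤ M) {s u : ℝ} (hs : s ∈ Icc a b)
    (hu : u ∈ Icc a b) : |deriv v s - deriv v u| ≤ M * |s - u| := by
  simpa only [Real.norm_eq_abs] using (convex_Icc a b).norm_image_sub_le_of_norm_deriv_le
    (fun x _ => hv.differentiable_deriv_two x) hM hu hs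

theorem integral_deriv_sub_slope (hv : ContDiff ℝ 2 v) (hab : a ≠ b) :
    ∫ s in a..b, (deriv v s - slope v a b) = 0 := by
  have hc : Continuous (deriv v) := hv.continuous_deriv (by norm_num)
  rw [integral_sub (hc.intervalIntegrable a b) intervalIntegrable_const, integral_deriv_eq_sub
      (fun x _ => hv.differentiable (by norm_num) x) (hc.intervalIntegrable a b),
    intervalIntegral.integral_const, slope_def_field, smul_eq_mul,
    mul_div_cancel₀ _ (sub_ne_zero.2 hab.symm), sub_self]

theorem abs_deriv_sub_slope_le (hv : ContDiff ℝ 2 v)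
    (hM : ∀ x ∈ Icc a b, |deriv (deriv v) x| ≤ M) (hab : a < b) {s : ℝ} (hs : s ∈ Icc a b) :
    |deriv v s - slope v a b| ≤ M * (b - a) / 2 := by
  have hc : Continuous (deriv v) := hv.continuous_deriv (by norm_num)
  have hba : 0 < b - a := sub_pos.2 hab
  have hM0 : 0 ≤ M := (abs_nonneg _).trans (hM s hs)
  have hmean : (b - a) * (deriv v s - slope v a b) = ∫ u in a..b, (deriv v s - deriv v u) := by
    rw [integral_sub intervalIntegrable_const (hc.intervalIntegrable a b),
      intervalIntegral.integral_const, smul_eq_mul, integral_deriv_eq_sub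
        (fun x _ => hv.differentiable (by norm_num) x) (hc.intervalIntegrable a b),
      slope_def_field]
    field_simp
  have hint : ‖∫ u in a..b, (deriv v s - deriv v u)‖ ≤ M * (b - a) ^ 2 / 2 :=
    calc ‖∫ u in a..b, (deriv v s - deriv v u)‖ ≤ ∫ u in a..b, M * |s - u| :=
          norm_integral_le_of_norm_le hab.le (ae_of_all _ fun u hu =>
            abs_deriv_sub_deriv_le hv hM hs ⟨hu.1.le, hu.2⟩)
            ((by fun_prop : Continuous fun u => M * |s - u|).intervalIntegrable _ _)
      _ ≤ M * (b - a) ^ 2 / 2 := by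
        rw [intervalIntegral.integral_const_mul, integral_abs_sub hs, mul_div_assoc]
        gcongr
        nlinarith [hs.1, hs.2]
  have h : |(b - a) * (deriv v s - slope v a b)| ≤ (b - a) * (M * (b - a) / 2) := by
    rw [hmean, ← Real.norm_eq_abs]; linarith
  rwa [abs_mul, abs_of_pos hba, mul_le_mul_iff_of_pos_left hba] at h

end SecondDerivativeBound

theorem abs_sub_rpow_neg_sub_le {α B b x y : ℝ} (hα : 0 ≤ α) (hbB : b < B) (hx : x ≤ b)
    (hy : y ≤ b) : |(B - x) ^ (-α) - (B - y) ^ (-α)| ≤ α * (B - b) ^ (-α - 1) * |x - y| := by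
  have hderiv : ∀ z ∈ Iic b, HasDerivAt (fun s => (B - s) ^ (-α)) (α * (B - z) ^ (-α - 1)) z :=
    fun z hz => by
      convert ((hasDerivAt_id' z).const_sub B).rpow_const (p := -α)
        (Or.inl (by linarith [hz.out] : (0 : ℝ) < B - z).ne') using 1
      ring
  simpa only [Real.norm_eq_abs] using (convex_Iic b).norm_image_sub_le_of_norm_hasDerivWithin_le
    (fun z hz => (hderiv z hz).hasDerivWithinAt) (fun z hz => by
      have hBz : 0 < B - z := by linarith [hz.out]
      rw [Real.norm_eq_abs, abs_of_nonneg (mul_nonneg hα (rpow_nonneg hBz.le _))]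
      exact mul_le_mul_of_nonneg_left
        (rpow_le_rpow_of_nonpos (by linarith) (by linarith [hz.out]) (by linarith)) hα) hy hx

theorem abs_integral_mul_le_of_integral_eq_zero {g K : ℝ → ℝ} {a b ε C : ℝ} (hab : a ≤ b)
    (hg : IntervalIntegrable g volume a b) (hg0 : ∫ s in a..b, g s = 0)
    (hgε : ∀ s ∈ Icc a b, |g s| ≤ ε) (hK : ContinuousOn K (Icc a b))
    (hKC : ∀ x ∈ Icc a b, ∀ y ∈ Icc a b, |K x - K y| ≤ C * |x - y|) :
    |∫ s in a..b, g s * K s| ≤ ε * C * (b - a) ^ 2 / 4 := by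
  set m := (a + b) / 2 with hm_def
  have hm : m ∈ Icc a b := ⟨by linarith, by linarith⟩
  have hK' : ContinuousOn K (uIcc a b) := by rwa [uIcc_of_le hab]
  have hcentre : ∫ s in a..b, g s * K s = ∫ s in a..b, g s * (K s - K m) := by
    simp only [mul_sub]
    rw [integral_sub (hg.mul_continuousOn hK') (hg.mul_const _),
      intervalIntegral.integral_mul_const, hg0, zero_mul, sub_zero]
  rw [hcentre, ← Real.norm_eq_abs]
  calc ‖∫ s in a..b, g s * (K s - K m)‖ ≤ ∫ s in a..b, ε * C * |m - s| :=
        norm_integral_le_of_norm_le hab (ae_of_all _ fun s hs => by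
          have hs' : s ∈ Icc a b := ⟨hs.1.le, hs.2⟩
          rw [Real.norm_eq_abs, abs_mul, abs_sub_comm m, mul_assoc]
          exact mul_le_mul (hgε s hs') (hKC s hs' m hm) (abs_nonneg _)
            ((abs_nonneg _).trans (hgε s hs')))
          ((by fun_prop : Continuous fun s => ε * C * |m - s|).intervalIntegrable _ _)
    _ = ε * C * (b - a) ^ 2 / 4 := by
      rw [intervalIntegral.integral_const_mul, integral_abs_sub hm]
      ring

theorem sum_range_rpow_neg_le {α : ℝ} (hα : 0 < α) (K : ℕ) :
    ∑ k ∈ Finset.range K, ((k : ℝ) + 1) ^ (-α - 1) ≤ 1 + 1 / α := by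
  rcases K with _ | K
  · simp only [Finset.range_zero, Finset.sum_empty]; positivity
  have hanti : AntitoneOn (fun x : ℝ => x ^ (-α - 1)) (Icc 1 (1 + K)) := fun x hx y hy hxy =>
    rpow_le_rpow_of_nonpos (by linarith [hx.1]) hxy (by linarith)
  have htail := hanti.sum_le_integral
  rw [integral_rpow (Or.inr ⟨by linarith, by simp [uIcc_of_le]⟩), show -α - 1 + 1 = -α by ring,
    div_neg, ← neg_div, neg_sub] at htail
  have hint : (1 - (1 + (K : ℝ)) ^ (-α)) / α ≤ 1 / α :=
    div_le_div_of_nonneg_right (by linarith [rpow_nonneg (by positivity : (0 : ℝ) ≤ 1 + K) (-α)])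
      hα.le
  rw [Finset.sum_range_succ']
  simp only [Nat.cast_add, Nat.cast_one, CharP.cast_eq_zero, add_zero, one_rpow,
    add_comm _ (1 : ℝ)] at htail ⊢
  linarith

theorem sum_range_sub_rpow_neg_le {α : ℝ} (hα : 0 < α) (p : ℕ) :
    ∑ j ∈ Finset.range p, ((p : ℝ) - j) ^ (-α - 1) ≤ 1 + 1 / α := by
  rw [← Finset.sum_range_reflect]
  refine le_of_eq_of_le (Finset.sum_congr rfl fun j hj => ?_) (sum_range_rpow_neg_le hα p)
  rw [Finset.mem_range] at hj
  rw [Nat.cast_sub (by omega), Nat.cast_sub (by omega)]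
  ring_nf

noncomputable def l1LocalError (v : ℝ → ℝ) (α a b B : ℝ) : ℝ :=
  ∫ s in a..b, (deriv v s - slope v a b) * (B - s) ^ (-α)

theorem l1LocalError_eq {v : ℝ → ℝ} (hv : Continuous (deriv v)) {α : ℝ} (hα : α < 1)
    (a b B : ℝ) :
    l1LocalError v α a b B = (∫ s in a..b, deriv v s * (B - s) ^ (-α)) -
      slope v a b * ∫ s in a..b, (B - s) ^ (-α) := by
  have hK := intervalIntegrable_sub_rpow (by linarith : -1 < -α) B a b
  rw [l1LocalError, ← intervalIntegral.integral_const_mul, ← integral_sub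
    (hK.continuousOn_mul hv.continuousOn) (hK.const_mul _)]
  simp only [sub_mul]

theorem integral_sub_sum_eq_sum_l1LocalError {v : ℝ → ℝ} (hv : Continuous (deriv v)) {α : ℝ}
    (hα : α < 1) (t : ℕ → ℝ) (n : ℕ) (B : ℝ) :
    (∫ s in t 0..t n, deriv v s * (B - s) ^ (-α)) -
        ∑ k ∈ Finset.Icc 1 n, (v (t k) - v (t (k - 1))) / (t k - t (k - 1)) *
          ∫ s in t (k - 1)..t k, (B - s) ^ (-α) =
      ∑ k ∈ Finset.range n, l1LocalError v α (t k) (t (k + 1)) B := by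
  have hK := intervalIntegrable_sub_rpow (by linarith : -1 < -α) B
  rw [← sum_integral_adjacent_intervals fun k _ => (hK _ _).continuousOn_mul hv.continuousOn,
    ← Finset.Ico_add_one_right_eq_Icc, Finset.sum_Ico_eq_sum_range, Nat.add_sub_cancel,
    ← Finset.sum_sub_distrib]
  simp only [add_comm 1, Nat.add_sub_cancel, l1LocalError_eq hv hα, slope_def_field]

section LocalError

variable {v : ℝ → ℝ} {α a b M : ℝ}

theorem abs_l1LocalError_self_le (hv : ContDiff ℝ 2 v)
    (hM : ∀ x ∈ Icc a b, |deriv (deriv v) x| ≤ M) (hα : α < 1) (hab : a < b) :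
    |l1LocalError v α a b b| ≤ M * (b - a) ^ (2 - α) / (2 * (1 - α)) := by
  have hK := intervalIntegrable_sub_rpow (by linarith : -1 < -α) b a b
  rw [l1LocalError, ← Real.norm_eq_abs]
  calc ‖∫ s in a..b, (deriv v s - slope v a b) * (b - s) ^ (-α)‖
      ≤ ∫ s in a..b, M * (b - a) / 2 * (b - s) ^ (-α) :=
        norm_integral_le_of_norm_le hab.le (ae_of_all _ fun s hs => by
          rw [Real.norm_eq_abs, abs_mul, abs_of_nonneg (rpow_nonneg (by linarith [hs.2]) _)]
          exact mul_le_mul_of_nonneg_right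
            (abs_deriv_sub_slope_le hv hM hab ⟨hs.1.le, hs.2⟩)
            (rpow_nonneg (by linarith [hs.2]) _)) (hK.const_mul _)
    _ = M * (b - a) ^ (2 - α) / (2 * (1 - α)) := by
      rw [intervalIntegral.integral_const_mul, integral_sub_rpow (by linarith),
        show (2 : ℝ) - α = 1 + (-α + 1) by ring, rpow_add (sub_pos.2 hab) 1, rpow_one]
      field_simp
      ring

theorem abs_l1LocalError_le {B : ℝ} (hv : ContDiff ℝ 2 v)
    (hM : ∀ x ∈ Icc a b, |deriv (deriv v) x| ≤ M) (hα : 0 ≤ α) (hab : a < b) (hbB : b < B) :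
    |l1LocalError v α a b B| ≤ α * M * ((b - a) / 2) ^ 3 * (B - b) ^ (-α - 1) := by
  have hK : ContinuousOn (fun s => (B - s) ^ (-α)) (Icc a b) := fun s hs =>
    ((continuousAt_const.sub continuousAt_id).rpow_const
      (Or.inl (by linarith [hs.2] : (0 : ℝ) < B - s).ne')).continuousWithinAt
  refine (abs_integral_mul_le_of_integral_eq_zero hab.le
    ((hv.continuous_deriv (by norm_num)).sub continuous_const |>.intervalIntegrable a b)
    (integral_deriv_sub_slope hv hab.ne) (fun s hs => abs_deriv_sub_slope_le hv hM hab hs) hK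
    fun x hx y hy => abs_sub_rpow_neg_sub_le hα hbB hx.2 hy.2).trans_eq ?_
  ring

end LocalError

section QuasiUniformMesh

variable {N : ℕ} {μ : ℝ} {t : ℕ → ℝ}

theorem quasiUniform_closedForm (h0 : t 0 = 0)
    (hrec : ∀ m, 1 ≤ m → m ≤ N → t m = t (m - 1) + ((N : ℝ) + 1 - m) * μ) :
    ∀ m ≤ N, t m = μ * m * (2 * N + 1 - m) / 2 := by
  intro m
  induction m with
  | zero => simp [h0]
  | succ m ih =>
    intro hm
    rw [hrec (m + 1) (by omega) hm, Nat.add_sub_cancel, ih (by omega)]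
    push_cast
    ring

theorem quasiUniform_sub (ht : ∀ m ≤ N, t m = μ * m * (2 * N + 1 - m) / 2) {i j : ℕ}
    (hi : i ≤ N) (hj : j ≤ N) : t j - t i = μ * (j - i) * (2 * N + 1 - i - j) / 2 := by
  rw [ht i hi, ht j hj]
  ring

theorem quasiUniform_step_Icc_subset (ht : ∀ m ≤ N, t m = μ * m * (2 * N + 1 - m) / 2)
    (hμ : 0 ≤ μ) {j n : ℕ} (hjn : j < n) (hn : n ≤ N) :
    Icc (t j) (t (j + 1)) ⊆ Icc 0 (t n) := by
  have hjn' : (j : ℝ) + 1 ≤ n := by exact_mod_cast hjn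
  have hn' : (n : ℝ) ≤ N := by exact_mod_cast hn
  have hj0 : (0 : ℝ) ≤ j := j.cast_nonneg
  refine Icc_subset_Icc ?_ (sub_nonneg.1 ?_)
  · rw [ht j (by omega)]
    exact div_nonneg (mul_nonneg (mul_nonneg hμ hj0) (by linarith)) zero_le_two
  · rw [quasiUniform_sub ht (by omega) hn]
    push_cast
    exact div_nonneg (mul_nonneg (mul_nonneg hμ (by linarith)) (by linarith)) zero_le_two

variable {v : ℝ → ℝ} {α M : ℝ} {j : ℕ}

theorem abs_l1LocalError_quasiUniform_le (ht : ∀ m ≤ N, t m = μ * m * (2 * N + 1 - m) / 2)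
    (hμ : 0 < μ) (hv : ContDiff ℝ 2 v) (hα0 : 0 ≤ α) (hα2 : α ≤ 2) {p : ℕ}
    (hM : ∀ x ∈ Icc 0 (t (p + 1)), |deriv (deriv v) x| ≤ M) (hjp : j < p) (hpN : p + 1 ≤ N) :
    |l1LocalError v α (t j) (t (j + 1)) (t (p + 1))| ≤
      α * M * (μ * N / 2) ^ (2 - α) * ((p : ℝ) - j) ^ (-α - 1) := by
  have hjp' : (j : ℝ) + 1 ≤ p := by exact_mod_cast hjp
  have hpN' : (p : ℝ) + 1 ≤ N := by exact_mod_cast hpN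
  have hj0 : (0 : ℝ) ≤ j := j.cast_nonneg
  set δ := (t (j + 1) - t j) / 2 with hδ
  have hδ_eq : δ = μ * (N - j) / 2 := by
    rw [hδ, quasiUniform_sub ht (by omega) (by omega)]
    push_cast
    ring
  have hδ0 : 0 < δ := by
    rw [hδ_eq]
    exact half_pos (mul_pos hμ (by linarith))
  have hδN : δ ≤ μ * N / 2 := by rw [hδ_eq]; nlinarith
  have hsub := quasiUniform_step_Icc_subset ht hμ.le (by omega : j < p + 1) hpN
  have hM0 : 0 ≤ M := (abs_nonneg _).trans (hM _ (hsub (left_mem_Icc.2 (by linarith))))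
  have hgap : (p - j) * δ ≤ t (p + 1) - t (j + 1) := by
    rw [hδ_eq, quasiUniform_sub ht (by omega) hpN]
    push_cast
    nlinarith [mul_nonneg hμ.le (by linarith : (0 : ℝ) ≤ p - j)]
  calc |l1LocalError v α (t j) (t (j + 1)) (t (p + 1))|
      ≤ α * M * δ ^ 3 * (t (p + 1) - t (j + 1)) ^ (-α - 1) :=
        abs_l1LocalError_le hv (fun x hx => hM x (hsub hx)) hα0 (by linarith) (by nlinarith)
    _ ≤ α * M * δ ^ 3 * ((p - j) * δ) ^ (-α - 1) := by
        gcongr _ * ?_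
        exact rpow_le_rpow_of_nonpos (mul_pos (by linarith) hδ0) hgap (by linarith)
    _ = α * M * δ ^ (2 - α) * ((p : ℝ) - j) ^ (-α - 1) := by
        rw [mul_rpow (by linarith) hδ0.le, show (2 : ℝ) - α = (3 : ℕ) + (-α - 1) by push_cast; ring,
          rpow_add hδ0, rpow_natCast]
        ring
    _ ≤ α * M * (μ * N / 2) ^ (2 - α) * ((p : ℝ) - j) ^ (-α - 1) := by
        gcongr
        exact rpow_nonneg (by linarith) _

theorem abs_l1LocalError_quasiUniform_last_le
    (ht : ∀ m ≤ N, t m = μ * m * (2 * N + 1 - m) / 2) (hμ : 0 < μ) (hv : ContDiff ℝ 2 v)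
    (hα : α < 1) (hM : ∀ x ∈ Icc 0 (t (j + 1)), |deriv (deriv v) x| ≤ M) (hjN : j + 1 ≤ N) :
    |l1LocalError v α (t j) (t (j + 1)) (t (j + 1))| ≤
      2 ^ (1 - α) / (1 - α) * M * (μ * N / 2) ^ (2 - α) := by
  have hjN' : (j : ℝ) + 1 ≤ N := by exact_mod_cast hjN
  have hj0 : (0 : ℝ) ≤ j := j.cast_nonneg
  have hstep : t (j + 1) - t j = μ * (N - j) := by
    rw [quasiUniform_sub ht (by omega) hjN]
    push_cast
    ring
  have hsub := quasiUniform_step_Icc_subset ht hμ.le (Nat.lt_succ_self j) hjN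
  have hM0 : 0 ≤ M := (abs_nonneg _).trans (hM _ (hsub (left_mem_Icc.2 (by nlinarith))))
  calc |l1LocalError v α (t j) (t (j + 1)) (t (j + 1))|
      ≤ M * (t (j + 1) - t j) ^ (2 - α) / (2 * (1 - α)) :=
        abs_l1LocalError_self_le hv (fun x hx => hM x (hsub hx)) hα (by nlinarith)
    _ ≤ M * (2 * (μ * N / 2)) ^ (2 - α) / (2 * (1 - α)) := by
        rw [hstep]
        gcongr M * ?_ ^ _ / _ <;> nlinarith
    _ = 2 ^ (1 - α) / (1 - α) * M * (μ * N / 2) ^ (2 - α) := by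
        rw [mul_rpow zero_le_two (by positivity), show (2 : ℝ) - α = 1 + (1 - α) by ring,
          rpow_add zero_lt_two, rpow_one]
        field_simp

end QuasiUniformMesh

theorem L1_remainder_bound_quasi_uniform_interior_general
    (α T : ℝ) (hα0 : 0 < α) (hα1 : α < 1) (hT : 0 < T)
    (N : ℕ)
    (t : ℕ → ℝ) (h0 : t 0 = 0)
    (hrec : ∀ m, 1 ≤ m → m ≤ N →
      t m = t (m - 1) + ((N : ℝ) + 1 - m) * (2 * T / (N * (N + 1))))
    (v : ℝ → ℝ) (hv : ContDiff ℝ 2 v)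
    (n : ℕ) (hn1 : 1 ≤ n) (hnN : n ≤ N - 1)
    (M : ℝ)
    (hM : IsGreatest ((fun s => |deriv (deriv v) s|) '' Set.Icc 0 (t n)) M) :
    |(∫ s in (0:ℝ)..t n, deriv v s * (t n - s) ^ (-α)) -
        ∑ k ∈ Finset.Icc 1 n,
          (v (t k) - v (t (k - 1))) / (t k - t (k - 1)) *
            ∫ s in t (k - 1)..t k, (t n - s) ^ (-α)| ≤
      (1 + α + (2 : ℝ) ^ (1 - α) / (1 - α)) * M * T ^ (2 - α) *
        ((N : ℝ) + 1) ^ (α - 2) := by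
  obtain ⟨p, rfl⟩ : ∃ p, n = p + 1 := ⟨n - 1, by omega⟩
  have hN0 : (0 : ℝ) < N := by exact_mod_cast (by omega : 0 < N)
  have hμ : 0 < 2 * T / (N * (N + 1)) := by positivity
  have ht := quasiUniform_closedForm h0 hrec
  have hM' : ∀ x ∈ Icc 0 (t (p + 1)), |deriv (deriv v) x| ≤ M := fun x hx => hM.2 ⟨x, hx, rfl⟩
  have hM0 : 0 ≤ M := by obtain ⟨x, -, rfl⟩ := hM.1; exact abs_nonneg _
  have hscale : T ^ (2 - α) * ((N : ℝ) + 1) ^ (α - 2) =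
      (2 * T / (N * (N + 1)) * N / 2) ^ (2 - α) := by
    rw [show 2 * T / (N * (N + 1)) * N / 2 = T / (N + 1) by field_simp,
      div_rpow hT.le (by positivity), div_eq_mul_inv, ← rpow_neg (by positivity), neg_sub]
  have hr := integral_sub_sum_eq_sum_l1LocalError (hv.continuous_deriv (by norm_num)) hα1 t
    (p + 1) (t (p + 1))
  rw [h0] at hr
  rw [hr, Finset.sum_range_succ, mul_assoc _ (T ^ _), hscale]
  set H := (2 * T / (N * (N + 1)) * N / 2) ^ (2 - α)
  calc _ ≤ ∑ j ∈ Finset.range p, |l1LocalError v α (t j) (t (j + 1)) (t (p + 1))| +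
        |l1LocalError v α (t p) (t (p + 1)) (t (p + 1))| :=
        (abs_add_le _ _).trans (add_le_add_left (Finset.abs_sum_le_sum_abs _ _) _)
    _ ≤ ∑ j ∈ Finset.range p, α * M * H * ((p : ℝ) - j) ^ (-α - 1) +
        2 ^ (1 - α) / (1 - α) * M * H :=
        add_le_add
          (Finset.sum_le_sum fun j hj => abs_l1LocalError_quasiUniform_le ht hμ hv hα0.le
            (by linarith) hM' (Finset.mem_range.1 hj) (by omega))
          (abs_l1LocalError_quasiUniform_last_le ht hμ hv hα1 hM' (by omega))
    _ ≤ α * M * H * (1 + 1 / α) + 2 ^ (1 - α) / (1 - α) * M * H := by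
      rw [← Finset.mul_sum]
      gcongr
      exact sum_range_sub_rpow_neg_le hα0 p
    _ = _ := by field_simp; ring

/-- L1 remainder estimate on the special quasi-uniform mesh, interior levels:
for `1 ≤ n ≤ N−1`,
`|rⁿ| ≤ (1 + α + 2^(1−α)/(1−α)) · max_{0≤s≤tⁿ} |v''(s)| · T^(2−α) (N+1)^(α−2)`. -/
theorem L1_remainder_bound_quasi_uniform_interior
    (α T : ℝ) (hα0 : 0 < α) (hα1 : α < 1) (hT : 0 < T)
    (N : ℕ) (hN : 2 ≤ N)
    (t : ℕ → ℝ) (h0 : t 0 = 0)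
    (hrec : ∀ m, 1 ≤ m → m ≤ N →
      t m = t (m - 1) + ((N : ℝ) + 1 - m) * (2 * T / (N * (N + 1))))
    (v : ℝ → ℝ) (hv : ContDiff ℝ 2 v)
    (n : ℕ) (hn1 : 1 ≤ n) (hnN : n ≤ N - 1)
    (M : ℝ)
    (hM : IsGreatest ((fun s => |deriv (deriv v) s|) '' Set.Icc 0 (t n)) M) :
    |(∫ s in (0:ℝ)..t n, deriv v s * (t n - s) ^ (-α)) -
        ∑ k ∈ Finset.Icc 1 n,
          (v (t k) - v (t (k - 1))) / (t k - t (k - 1)) *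
            ∫ s in t (k - 1)..t k, (t n - s) ^ (-α)| ≤
      (1 + α + (2 : ℝ) ^ (1 - α) / (1 - α)) * M * T ^ (2 - α) *
        ((N : ℝ) + 1) ^ (α - 2) :=
  L1_remainder_bound_quasi_uniform_interior_general α T hα0 hα1 hT N t h0 hrec v hv n hn1 hnN M hM
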